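/- If the blanketing space V_R = { s0 + Σ_i (a i) • v i | a : Fin n → ℚ } and the solution space V_Ψ = { x : Fin m → ℚ | x j = β } are disjoint, then no reachable state of the VAS satisfies Ψ, i.e. there is no state s reachable from s0 with s j = β. -/

import Mathlib

/-!
Every state reached by a trace, valid or not, is `s0` plus an integer combination of the update
vectors, so over `ℚ` it lies in the blanketing space `V_R`. A reachable state with `s j = β`
would therefore lie in `V_R ∩ V_Ψ`.
-/

def ValidTrace {n m : ℕ} (v : Fin n → (Fin m → ℤ)) (s0 : Fin m → ℤ)
    (l : List (Fin n)) : Prop :=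
  ∀ t ≤ l.length, ∀ j : Fin m, 0 ≤ (s0 + ((l.take t).map v).sum) j

def Reachable {n m : ℕ} (v : Fin n → (Fin m → ℤ)) (s0 : Fin m → ℤ)
    (s : Fin m → ℤ) : Prop :=
  ∃ l : List (Fin n), ValidTrace v s0 l ∧ s = s0 + (l.map v).sum

open Submodule Set

theorem list_sum_map_mem_span_range {R M ι : Type*} [Semiring R] [AddCommMonoid M] [Module R M]
    (w : ι → M) (l : List ι) : (l.map w).sum ∈ span R (range w) :=
  _root_.list_sum_mem fun _ hx => by
    obtain ⟨i, -, rfl⟩ := List.mem_map.1 hx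
    exact subset_span (mem_range_self i)

theorem exists_intCast_add_list_sum_eq {ι : Type*} [Fintype ι] {m : ℕ} (v : ι → (Fin m → ℤ))
    (s0 : Fin m → ℤ) (l : List ι) :
    ∃ a : ι → ℚ, (fun k => ((s0 + (l.map v).sum) k : ℚ)) =
      (fun k => (s0 k : ℚ)) + ∑ i, a i • fun k => (v i k : ℚ) := by
  let cast : (Fin m → ℤ) →+ (Fin m → ℚ) := (Int.castAddHom ℚ).compLeft (Fin m)
  obtain ⟨a, ha⟩ := (mem_span_range_iff_exists_fun ℚ).1
    (list_sum_map_mem_span_range (R := ℚ) (cast ∘ v) l)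
  refine ⟨a, ?_⟩
  change cast (s0 + (l.map v).sum) = cast s0 + ∑ i, a i • (cast ∘ v) i
  rw [ha, ← List.map_map, ← map_list_sum, ← map_add]

theorem disjoint_blanketing_solution_implies_unreachable_general
    (n m : ℕ) (v : Fin n → (Fin m → ℤ)) (s0 : Fin m → ℤ)
    (j : Fin m) (β : ℤ)
    (VR : Set (Fin m → ℚ))
    (hVR : VR = { y | ∃ a : Fin n → ℚ,
        y = (fun k => (s0 k : ℚ)) + ∑ i : Fin n, a i • (fun k => (v i k : ℚ)) })
    (VΨ : Set (Fin m → ℚ))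
    (hVΨ : VΨ = { x | x j = (β : ℚ) })
    (hdisj : VR ∩ VΨ = ∅) :
    ¬ ∃ s : Fin m → ℤ, Reachable v s0 s ∧ s j = β := by
  rintro ⟨s, ⟨l, -, rfl⟩, hsj⟩
  have hmem : (fun k => ((s0 + (l.map v).sum) k : ℚ)) ∈ VR ∩ VΨ := by
    subst hVR hVΨ
    exact ⟨exists_intCast_add_list_sum_eq v s0 l, congrArg (Int.cast : ℤ → ℚ) hsj⟩
  simp [hdisj] at hmem

/-- If the blanketing space `V_R` and the solution space
`V_Ψ = { x | x j = β }` are disjoint, then no reachable state satisfies `Ψ`. -/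
theorem disjoint_blanketing_solution_implies_unreachable
    (n m : ℕ) (v : Fin n → (Fin m → ℤ)) (s0 : Fin m → ℤ)
    (hs0 : ∀ j, 0 ≤ s0 j) (j : Fin m) (β : ℤ)
    (VR : Set (Fin m → ℚ))
    (hVR : VR = { y | ∃ a : Fin n → ℚ,
        y = (fun k => (s0 k : ℚ)) + ∑ i : Fin n, a i • (fun k => (v i k : ℚ)) })
    (VΨ : Set (Fin m → ℚ))
    (hVΨ : VΨ = { x | x j = (β : ℚ) })
    (hdisj : VR ∩ VΨ = ∅) :
    ¬ ∃ s : Fin m → ℤ, Reachable v s0 s ∧ s j = β :=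
  disjoint_blanketing_solution_implies_unreachable_general n m v s0 j β VR hVR VΨ hVΨ hdisj
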